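/- Let G be an r-regular graph with star set X for a non-main eigenvalue μ such that G - X = K_s ∇ tK_1 (s,t ≥ 2). For u ∈ X with a = |N_{K_s}(u)| and b = |N_{tK_1}(u)|, the identity ⟨b_u, b_u⟩ = μ expands to: μ·m(μ) = α a² + βμa + 2δab + γb² + β(μ+1)b, where m(μ) = μ(μ+1)(μ²-(s-1)μ-st), α = μ²+μt, β = μ²-(s-1)μ-st, γ = sμ+s, δ = μ²+μ. Equivalently, μ⁵ + (2-s)μ⁴ + (1-b-s-st-a)μ³ + (as-2b-2ab+bs-st-a²-a)μ² + (bs-2ab-b-a²t-b²s+ast+bst)μ - sb² + stb = 0. -/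

import Mathlib

open Matrix

open scoped Classical

noncomputable section

variable {V : Type*} [Fintype V] [DecidableEq V]

/-- The real adjacency matrix of a graph. -/
def adjMat (G : SimpleGraph V) : Matrix V V ℝ :=
  letI := Classical.decRel G.Adj
  G.adjMatrix ℝ

/-- `μ` is an (adjacency) eigenvalue of `G`. -/
def IsEigen (G : SimpleGraph V) (μ : ℝ) : Prop :=
  Module.End.HasEigenvalue (Matrix.toLin' (adjMat G)) μ

/-- The multiplicity of `μ` as an eigenvalue of `G`. -/
def eigMult (G : SimpleGraph V) (μ : ℝ) : ℕ :=
  Module.finrank ℝ (Module.End.eigenspace (Matrix.toLin' (adjMat G)) μ)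

/-- `X` is a star set for `μ` in `G`: `|X|` equals the multiplicity of `μ` and `μ` is
not an eigenvalue of `G - X`. -/
def IsStarSet (G : SimpleGraph V) (μ : ℝ) (X : Finset V) : Prop :=
  X.card = eigMult G μ ∧ ¬ IsEigen (G.induce ((↑X : Set V)ᶜ)) μ

/-- `μ` is a non-main eigenvalue: every `μ`-eigenvector is orthogonal to the
all-ones vector. -/
def IsNonMain (G : SimpleGraph V) (μ : ℝ) : Prop :=
  ∀ x : V → ℝ, (adjMat G).mulVec x = μ • x → x ⬝ᵥ (fun _ => 1) = 0

/-- The join `G ∇ H` of two graphs. -/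
def joinG {α β : Type*} (G : SimpleGraph α) (H : SimpleGraph β) : SimpleGraph (α ⊕ β) where
  Adj u v :=
    match u, v with
    | .inl a, .inl b => G.Adj a b
    | .inr a, .inr b => H.Adj a b
    | _, _ => True
  symm := ⟨by rintro (a | a) (b | b) h <;> simp_all <;> exact h.symm⟩
  loopless := ⟨by
    rintro (a | a) h
    · exact G.loopless.irrefl _ h
    · exact H.loopless.irrefl _ h⟩

/-- The perfect matching graph `nK_2` on `Fin n × Fin 2`. -/
def matchingG (n : ℕ) : SimpleGraph (Fin n × Fin 2) where
  Adj u v := u.1 = v.1 ∧ u.2 ≠ v.2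
  symm := ⟨by rintro ⟨i, a⟩ ⟨j, b⟩ ⟨h1, h2⟩; exact ⟨h1.symm, h2.symm⟩⟩
  loopless := ⟨by rintro ⟨i, a⟩ ⟨_, h⟩; exact h rfl⟩

/-! Because `X` is a star set, restricting to `X` is an isomorphism from the `μ`-eigenspace of `G`
onto `ℝ^X`: an eigenvector vanishing on `X` would restrict to a `μ`-eigenvector of `G - X`.
Hence some eigenvector `z` equals the indicator of `u` on `X`, and the eigenvalue equations
of `z` say that `y = z|_H` solves `(μI - A(H)) y = b_u` with `⟨b_u, y⟩ = μ`, i.e.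
`⟨b_u, b_u⟩ = μ`.
For `H = K_s ∇ tK_1` the system only involves the sums `P`, `Q` of `y` over the two parts, and
eliminating `P` and `Q` from the summed equations yields the identity. -/

@[simp]
theorem adjMat_apply {W : Type*} (G : SimpleGraph W) (v w : W) :
    adjMat G v w = if G.Adj v w then 1 else 0 := by
  simp [adjMat]

section StarSet

variable {W : Type*} [Fintype W] [DecidableEq W]

theorem IsStarSet.eq_zero_of_mulVec_eq_smul {G : SimpleGraph W} {μ : ℝ}
    {X : Finset W} (hX : IsStarSet G μ X) {z : W → ℝ} (hz : adjMat G *ᵥ z = μ • z)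
    (h0 : ∀ x ∈ X, z x = 0) : z = 0 := by
  set S : Set W := (↑X : Set W)ᶜ
  have hzS : (fun v : S => z v) ∈ Module.End.eigenspace (toLin' (adjMat (G.induce S))) μ := by
    rw [Module.End.mem_eigenspace_iff, toLin'_apply]
    funext v
    rw [Pi.smul_apply, ← Pi.smul_apply, ← hz, mulVec, mulVec, dotProduct, dotProduct,
      ← Fintype.sum_subtype_add_sum_subtype (· ∈ X)]
    simp only [adjMat_apply, SimpleGraph.comap_adj, Function.Embedding.subtype_apply, ite_mul,
      one_mul, zero_mul, SetLike.coe_mem, h0, mul_zero, Finset.sum_const_zero, zero_add, S]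
    -- the sums run over `↥(↑X)ᶜ` and `{x // x ∉ X}`, which are the same type
    rfl
  have hzS0 : (fun v : S => z v) = 0 := by
    by_contra hne
    exact hX.2 (Module.End.hasEigenvalue_of_hasEigenvector ⟨hzS, hne⟩)
  funext v
  by_cases hv : v ∈ X
  · exact h0 v hv
  · exact congrFun hzS0 ⟨v, hv⟩

theorem IsStarSet.exists_mulVec_eq_smul_forall_mem_eq {G : SimpleGraph W} {μ : ℝ}
    {X : Finset W} (hX : IsStarSet G μ X) (f : W → ℝ) :
    ∃ z : W → ℝ, adjMat G *ᵥ z = μ • z ∧ ∀ x ∈ X, z x = f x := by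
  set E := Module.End.eigenspace (toLin' (adjMat G)) μ
  let restrict : E →ₗ[ℝ] (X → ℝ) := (LinearMap.funLeft ℝ ℝ Subtype.val).comp E.subtype
  have hinj : Function.Injective restrict := by
    rw [← LinearMap.ker_eq_bot, Submodule.eq_bot_iff]
    rintro ⟨z, hzE⟩ hker
    refine Subtype.ext (hX.eq_zero_of_mulVec_eq_smul ?_ fun x hx => congrFun hker ⟨x, hx⟩)
    rw [← toLin'_apply]
    exact Module.End.mem_eigenspace_iff.mp hzE
  have hrank : Module.finrank ℝ E = Module.finrank ℝ (X → ℝ) := by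
    rw [Module.finrank_fintype_fun_eq_card, Fintype.card_coe, hX.1, eigMult]
  obtain ⟨⟨z, hzE⟩, hz⟩ :=
    (LinearMap.injective_iff_surjective_of_finrank_eq_finrank hrank).mp hinj (fun x => f x)
  refine ⟨z, ?_, fun x hx => congrFun hz ⟨x, hx⟩⟩
  rw [← toLin'_apply]
  exact Module.End.mem_eigenspace_iff.mp hzE

end StarSet

section StarComplement

variable {α W : Type*} [Fintype α] [Fintype W]

theorem starComplement_reconstruction {G : SimpleGraph (α ⊕ W)} {μ : ℝ} {z : α ⊕ W → ℝ}
    (hz : adjMat G *ᵥ z = μ • z) {u : α} (hu : z (.inl u) = 1)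
    (hne : ∀ u', u' ≠ u → z (.inl u') = 0) :
    μ • (z ∘ .inr) - (adjMat G).submatrix .inr .inr *ᵥ (z ∘ .inr) =
        (fun w => adjMat G (.inl u) (.inr w)) ∧
      (fun w => adjMat G (.inl u) (.inr w)) ⬝ᵥ (z ∘ .inr) = μ := by
  have hrow (v : α ⊕ W) :
      μ * z v = adjMat G v (.inl u) + ∑ w, adjMat G v (.inr w) * z (.inr w) := by
    rw [← smul_eq_mul, ← Pi.smul_apply, ← hz, mulVec, dotProduct, Fintype.sum_sum_type,
      Fintype.sum_eq_single u fun u' h => by rw [hne u' h, mul_zero], hu, mul_one]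
  constructor
  · funext w
    have h := hrow (.inr w)
    rw [show adjMat G (.inr w) (.inl u) = adjMat G (.inl u) (.inr w) by simp [G.adj_comm]] at h
    simp only [Pi.sub_apply, Pi.smul_apply, smul_eq_mul, Function.comp_apply, mulVec,
      dotProduct, submatrix_apply, h]
    ring
  · simpa [hu, dotProduct] using (hrow (.inl u)).symm

end StarComplement

theorem sum_ite_eq_zero_else {ι M : Type*} [Fintype ι] [DecidableEq ι] [AddCommGroup M]
    (i : ι) (f : ι → M) :
    ∑ x, (if i = x then 0 else f x) = ∑ x, f x - f i := by
  rw [← Finset.sum_erase_eq_sub (Finset.mem_univ i), ← Finset.filter_ne, Finset.sum_filter]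
  simp_rw [ite_not]

section Join

variable {s t : ℕ}

local notation "K" => joinG (⊤ : SimpleGraph (Fin s)) (⊥ : SimpleGraph (Fin t))

theorem adjMat_join_inl_inl (i i' : Fin s) :
    adjMat K (.inl i) (.inl i') = if i = i' then 0 else 1 := by
  by_cases h : i = i' <;> simp [joinG, h]

theorem adjMat_join_inl_inr (i : Fin s) (j : Fin t) : adjMat K (.inl i) (.inr j) = 1 := by
  simp [joinG]

theorem adjMat_join_inr_inl (j : Fin t) (i : Fin s) : adjMat K (.inr j) (.inl i) = 1 := by
  simp [joinG]

theorem adjMat_join_inr_inr (j j' : Fin t) : adjMat K (.inr j) (.inr j') = 0 := by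
  simp [joinG]

variable {μ : ℝ} {y c : Fin s ⊕ Fin t → ℝ}

theorem join_resolvent_inl (hy : μ • y - adjMat K *ᵥ y = c) (i : Fin s) :
    (μ + 1) * y (.inl i) = c (.inl i) + ∑ i', y (.inl i') + ∑ j, y (.inr j) := by
  have h := congrFun hy (.inl i)
  simp only [Pi.sub_apply, Pi.smul_apply, smul_eq_mul, mulVec, dotProduct, Fintype.sum_sum_type,
    adjMat_join_inl_inl, adjMat_join_inl_inr, ite_mul, zero_mul, one_mul,
    sum_ite_eq_zero_else] at h
  linear_combination h

theorem join_resolvent_inr (hy : μ • y - adjMat K *ᵥ y = c) (j : Fin t) :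
    μ * y (.inr j) = c (.inr j) + ∑ i, y (.inl i) := by
  have h := congrFun hy (.inr j)
  simp only [Pi.sub_apply, Pi.smul_apply, smul_eq_mul, mulVec, dotProduct, Fintype.sum_sum_type,
    adjMat_join_inr_inl, adjMat_join_inr_inr, zero_mul, one_mul, Finset.sum_const_zero,
    add_zero] at h
  linear_combination h

theorem join_resolvent_dotProduct (hy : μ • y - adjMat K *ᵥ y = c)
    (hc : ∀ w, c w * c w = c w) {a b : ℝ} (ha : ∑ i, c (.inl i) = a) (hb : ∑ j, c (.inr j) = b) :
    c ⬝ᵥ y * (μ * (μ + 1) * (μ ^ 2 - ((s : ℝ) - 1) * μ - s * t)) =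
      (μ ^ 2 + μ * t) * a ^ 2 + (μ ^ 2 - ((s : ℝ) - 1) * μ - s * t) * μ * a
        + 2 * (μ ^ 2 + μ) * a * b + (s * μ + s) * b ^ 2
        + (μ ^ 2 - ((s : ℝ) - 1) * μ - s * t) * (μ + 1) * b := by
  set β := μ ^ 2 - ((s : ℝ) - 1) * μ - s * t
  set P := ∑ i, y (.inl i)
  set Q := ∑ j, y (.inr j)
  have hP : (μ + 1) * P = a + s * (P + Q) := by
    simp_rw [P, Finset.mul_sum, join_resolvent_inl hy, Finset.sum_add_distrib, ha]
    simp only [Finset.sum_const, Finset.card_univ, Fintype.card_fin, nsmul_eq_mul]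
    ring
  have hQ : μ * Q = b + t * P := by
    simp_rw [Q, Finset.mul_sum, join_resolvent_inr hy, Finset.sum_add_distrib, hb]
    simp only [Finset.sum_const, Finset.card_univ, Fintype.card_fin, nsmul_eq_mul]
    rfl
  have hSa : (μ + 1) * ∑ i, c (.inl i) * y (.inl i) = a * (1 + P + Q) := by
    simp_rw [Finset.mul_sum, mul_left_comm (μ + 1), join_resolvent_inl hy, mul_add, hc,
      Finset.sum_add_distrib, ← Finset.sum_mul, ha]
    ring
  have hSb : μ * ∑ j, c (.inr j) * y (.inr j) = b * (1 + P) := by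
    simp_rw [Finset.mul_sum, mul_left_comm μ, join_resolvent_inr hy, mul_add, hc,
      Finset.sum_add_distrib, ← Finset.sum_mul, hb]
    ring
  have hcy : c ⬝ᵥ y = ∑ i, c (.inl i) * y (.inl i) + ∑ j, c (.inr j) * y (.inr j) :=
    Fintype.sum_sum_type _
  linear_combination (μ * (μ + 1) * β) * hcy + (μ * β) * hSa + ((μ + 1) * β) * hSb
    + (μ * (a * μ + b * μ + b + a * t)) * hP
    + ((a * μ + (μ + 1) * b) * s + a * (β + t * s)) * hQ

end Join

theorem quintic_relation_general {α : Type*} [Fintype α] [DecidableEq α] (s t : ℕ)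
    (G : SimpleGraph (α ⊕ (Fin s ⊕ Fin t))) (μ : ℝ)
    (X : Finset (α ⊕ (Fin s ⊕ Fin t)))
    (hX : X = Finset.univ.map ⟨Sum.inl, Sum.inl_injective⟩)
    (hstar : IsStarSet G μ X)
    (hH : ∀ i j, G.Adj (Sum.inr i) (Sum.inr j) ↔
      (joinG (⊤ : SimpleGraph (Fin s)) (⊥ : SimpleGraph (Fin t))).Adj i j)
    (a b : α → ℕ)
    (ha : ∀ u, a u = (Finset.univ.filter
      (fun i : Fin s => G.Adj (Sum.inl u) (Sum.inr (Sum.inl i)))).card)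
    (hb : ∀ u, b u = (Finset.univ.filter
      (fun i : Fin t => G.Adj (Sum.inl u) (Sum.inr (Sum.inr i)))).card) :
    ∀ u : α,
      (μ * (μ * (μ + 1) * (μ ^ 2 - ((s : ℝ) - 1) * μ - s * t)) =
        (μ ^ 2 + μ * t) * (a u) ^ 2
          + (μ ^ 2 - ((s : ℝ) - 1) * μ - s * t) * μ * (a u)
          + 2 * (μ ^ 2 + μ) * (a u) * (b u)
          + ((s : ℝ) * μ + s) * (b u) ^ 2
          + (μ ^ 2 - ((s : ℝ) - 1) * μ - s * t) * (μ + 1) * (b u)) ∧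
      (μ ^ 5 + (2 - (s : ℝ)) * μ ^ 4 + (1 - (b u) - s - s * t - (a u)) * μ ^ 3
        + ((a u) * s - 2 * (b u) - 2 * (a u) * (b u) + (b u) * s - s * t
            - (a u : ℝ) ^ 2 - (a u)) * μ ^ 2
        + ((b u) * s - 2 * (a u) * (b u) - (b u) - (a u : ℝ) ^ 2 * t
            - (b u : ℝ) ^ 2 * s + (a u) * s * t + (b u) * s * t) * μ
        - s * (b u : ℝ) ^ 2 + s * t * (b u) = 0) := by
  intro u
  have hinX (u' : α) : .inl u' ∈ X := by simp [hX]
  obtain ⟨z, hz, hzX⟩ := hstar.exists_mulVec_eq_smul_forall_mem_eq (Pi.single (Sum.inl u) 1)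
  obtain ⟨hres, hdot⟩ := starComplement_reconstruction hz (by simpa using hzX _ (hinX u))
    fun u' hu' => by simpa [hu'] using hzX _ (hinX u')
  have hK : (adjMat G).submatrix .inr .inr = adjMat (joinG ⊤ ⊥) := by
    ext i j
    simp [hH]
  rw [hK] at hres
  have key := join_resolvent_dotProduct (a := a u) (b := b u) hres (fun w => by simp)
    (by simp [ha, Finset.sum_boole]) (by simp [hb, Finset.sum_boole])
  rw [hdot] at key
  exact ⟨key, by linear_combination key⟩

/-- Eq. (3): in an `r`-regular graph `G` with star set `X` for a non-main eigenvalue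
`μ` and star complement `K_s ∇ tK_1`, for each `u ∈ X` with `a = |N_{K_s}(u)|` and
`b = |N_{tK_1}(u)|`, the identity `⟨b_u,b_u⟩ = μ` expands to
`μ·m(μ) = αa² + βμa + 2δab + γb² + β(μ+1)b`, equivalently the quintic equation. -/
theorem quintic_relation {α : Type*} [Fintype α] [DecidableEq α] (s t : ℕ)
    (hs : 2 ≤ s) (ht : 2 ≤ t) (r : ℕ) (G : SimpleGraph (α ⊕ (Fin s ⊕ Fin t)))
    (hreg : G.IsRegularOfDegree r) (μ : ℝ) (hμ : IsEigen G μ) (hnm : IsNonMain G μ)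
    (X : Finset (α ⊕ (Fin s ⊕ Fin t)))
    (hX : X = Finset.univ.map ⟨Sum.inl, Sum.inl_injective⟩)
    (hstar : IsStarSet G μ X)
    (hH : ∀ i j, G.Adj (Sum.inr i) (Sum.inr j) ↔
      (joinG (⊤ : SimpleGraph (Fin s)) (⊥ : SimpleGraph (Fin t))).Adj i j)
    (a b : α → ℕ)
    (ha : ∀ u, a u = (Finset.univ.filter
      (fun i : Fin s => G.Adj (Sum.inl u) (Sum.inr (Sum.inl i)))).card)
    (hb : ∀ u, b u = (Finset.univ.filter
      (fun i : Fin t => G.Adj (Sum.inl u) (Sum.inr (Sum.inr i)))).card) :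
    ∀ u : α,
      (μ * (μ * (μ + 1) * (μ ^ 2 - ((s : ℝ) - 1) * μ - s * t)) =
        (μ ^ 2 + μ * t) * (a u) ^ 2
          + (μ ^ 2 - ((s : ℝ) - 1) * μ - s * t) * μ * (a u)
          + 2 * (μ ^ 2 + μ) * (a u) * (b u)
          + ((s : ℝ) * μ + s) * (b u) ^ 2
          + (μ ^ 2 - ((s : ℝ) - 1) * μ - s * t) * (μ + 1) * (b u)) ∧
      (μ ^ 5 + (2 - (s : ℝ)) * μ ^ 4 + (1 - (b u) - s - s * t - (a u)) * μ ^ 3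
        + ((a u) * s - 2 * (b u) - 2 * (a u) * (b u) + (b u) * s - s * t
            - (a u : ℝ) ^ 2 - (a u)) * μ ^ 2
        + ((b u) * s - 2 * (a u) * (b u) - (b u) - (a u : ℝ) ^ 2 * t
            - (b u : ℝ) ^ 2 * s + (a u) * s * t + (b u) * s * t) * μ
        - s * (b u : ℝ) ^ 2 + s * t * (b u) = 0) :=
  quintic_relation_general s t G μ X hX hstar hH a b ha hb

end
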